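/- arXiv:0902.1668 — 4 statements merged into one kernel-verified Lean document; each statement's English description precedes it below -/
import Mathlib

section
/- Let G be a nontrivial finite solvable group. Define S(G) to be the intersection of all normal subgroups K of G such that the Fitting height of G/K is strictly less than the Fitting height of G. Then S(G) is nontrivial and S(G) is contained in the Fitting subgroup F(G). -/
/-!
Groups of Fitting height at most `n` are closed under subgroups and finite direct products;
since `G ⧸ (K ⊓ L)` embeds in `(G ⧸ K) × (G ⧸ L)`, the normal subgroups `K` with `G ⧸ K` of
height at most `n` are closed under finite intersections. For `n = h(G) - 1` (note `h(G) > 0`,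
as `G` is solvable and nontrivial), `SG G` is such a finite intersection, so `G ⧸ SG G` has
height `< h(G)` and therefore `SG G ≠ ⊥`. Conversely, the first term `N` of a nilpotent series
of length `h(G)` is one of these `K`, so `SG G ≤ N ≤ F(G)`.
-/

/-- `FittingHeightLe n G` says the group `G` has a normal series of length at most `n`
with nilpotent quotients, i.e. Fitting height at most `n`. -/
def FittingHeightLe : ℕ → ∀ (G : Type) [Group G], Prop
  | 0, G, _ => Subsingleton G
  | (n+1), G, _ => ∃ (N : Subgroup G) (hN : N.Normal), Group.IsNilpotent N ∧
      (letI := hN; FittingHeightLe n (G ⧸ N))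

/-- The Fitting height of a group (junk value if no bound exists). -/
noncomputable def fittingHeight (G : Type) [Group G] : ℕ :=
  sInf {n | FittingHeightLe n G}

/-- `SG G` is the intersection of all normal subgroups of `G` whose quotient has
Fitting height strictly smaller than that of `G`. -/
noncomputable def SG (G : Type) [Group G] : Subgroup G :=
  sInf {K : Subgroup G | ∃ hK : K.Normal,
    (letI := hK; fittingHeight (G ⧸ K)) < fittingHeight G}

/-- The Fitting subgroup: the join of all nilpotent normal subgroups. -/
def FittingSub (G : Type) [Group G] : Subgroup G :=
  ⨆ (N : Subgroup G) (_ : N.Normal) (_ : Group.IsNilpotent N), N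

theorem Group.isNilpotent_of_injective {G H : Type*} [Group G] [Group H] [Group.IsNilpotent G]
    (f : H →* G) (hf : Function.Injective f) : Group.IsNilpotent H :=
  Subgroup.isNilpotent_of_ker_le_center f ((MonoidHom.ker_eq_bot_iff f).mpr hf ▸ bot_le)

theorem Group.isNilpotent_of_isMulCommutative (G : Type*) [Group G] [IsMulCommutative G] :
    Group.IsNilpotent G :=
  ⟨1, by rw [Subgroup.upperCentralSeries_one, Subgroup.center_eq_top_iff]; infer_instance⟩

namespace FittingHeightLe

theorem of_injective : ∀ {n : ℕ} {G H : Type} [Group G] [Group H] (f : H →* G),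
    Function.Injective f → FittingHeightLe n G → FittingHeightLe n H
  | 0, G, _, _, _, _, hf, h => by
      have : Subsingleton G := h
      exact hf.subsingleton
  | n + 1, _, _, _, _, f, hf, ⟨N, hN, _, hq⟩ => by
      have := hN
      let φ := (QuotientGroup.mk' N).comp f
      have hker : N.comap f = φ.ker := by
        rw [← MonoidHom.comap_ker, QuotientGroup.ker_mk']
      refine ⟨φ.ker, inferInstance, ?_,
        of_injective (QuotientGroup.kerLift φ) (QuotientGroup.kerLift_injective φ) hq⟩
      exact Group.isNilpotent_of_injective
        ((f.subgroupComap N).comp (MulEquiv.subgroupCongr hker).symm.toMonoidHom)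
        fun a b hab => Subtype.ext (hf (congrArg Subtype.val hab))

theorem of_mulEquiv {n : ℕ} {G H : Type} [Group G] [Group H] (e : H ≃* G)
    (h : FittingHeightLe n G) : FittingHeightLe n H :=
  of_injective e.toMonoidHom e.injective h

theorem quotient_of_ker_eq {n : ℕ} {G H : Type} [Group G] [Group H] {K : Subgroup G} [K.Normal]
    (φ : G →* H) (hK : φ.ker = K) (h : FittingHeightLe n H) : FittingHeightLe n (G ⧸ K) := by
  subst hK
  exact of_injective (QuotientGroup.kerLift φ) (QuotientGroup.kerLift_injective φ) h

theorem prod : ∀ {n : ℕ} {A B : Type} [Group A] [Group B],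
    FittingHeightLe n A → FittingHeightLe n B → FittingHeightLe n (A × B)
  | 0, A, B, _, _, hA, hB => by
      have : Subsingleton A := hA
      have : Subsingleton B := hB
      exact inferInstanceAs (Subsingleton (A × B))
  | n + 1, _, _, _, _, ⟨NA, hNA, _, hqA⟩, ⟨NB, hNB, _, hqB⟩ => by
      have := hNA; have := hNB
      refine ⟨NA.prod NB, inferInstance, Group.nilpotent_of_mulEquiv (NA.prodEquiv NB).symm, ?_⟩
      refine quotient_of_ker_eq ((QuotientGroup.mk' NA).prodMap (QuotientGroup.mk' NB)) ?_
        (prod hqA hqB)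
      rw [MonoidHom.ker_prodMap, QuotientGroup.ker_mk', QuotientGroup.ker_mk']

theorem succ {n : ℕ} {G : Type} [Group G] (h : FittingHeightLe n G) :
    FittingHeightLe (n + 1) G :=
  ⟨⊥, inferInstance, inferInstance, of_mulEquiv QuotientGroup.quotientBot h⟩

theorem mono {m n : ℕ} {G : Type} [Group G] (hmn : m ≤ n) (h : FittingHeightLe m G) :
    FittingHeightLe n G := by
  induction hmn with
  | refl => exact h
  | step _ ih => exact ih.succ

theorem of_subsingleton (n : ℕ) (G : Type) [Group G] [Subsingleton G] : FittingHeightLe n G :=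
  mono n.zero_le (‹Subsingleton G› : FittingHeightLe 0 G)

theorem of_quotient_of_eq_bot {n : ℕ} {G : Type} [Group G] {K : Subgroup G} [K.Normal]
    (hK : K = ⊥) (h : FittingHeightLe n (G ⧸ K)) : FittingHeightLe n G :=
  of_injective (QuotientGroup.mk' K)
    (by rw [← MonoidHom.ker_eq_bot_iff, QuotientGroup.ker_mk']; exact hK) h

theorem quotient_inf {n : ℕ} {G : Type} [Group G] (K L : Subgroup G) [K.Normal] [L.Normal]
    (hK : FittingHeightLe n (G ⧸ K)) (hL : FittingHeightLe n (G ⧸ L)) :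
    FittingHeightLe n (G ⧸ (K ⊓ L)) := by
  refine quotient_of_ker_eq ((QuotientGroup.mk' K).prod (QuotientGroup.mk' L)) ?_ (prod hK hL)
  rw [MonoidHom.ker_prod, QuotientGroup.ker_mk', QuotientGroup.ker_mk']

theorem of_derivedSeries_eq_bot : ∀ {n : ℕ} {G : Type} [Group G],
    derivedSeries G n = ⊥ → FittingHeightLe n G
  | 0, _, _, h => Subgroup.subsingleton_iff.mp (subsingleton_of_bot_eq_top h.symm)
  | n + 1, G, _, h => by
      have hcomm : IsMulCommutative (derivedSeries G n) := by
        rwa [← Subgroup.commutator_self_eq_bot_iff, ← derivedSeries_succ]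
      refine ⟨derivedSeries G n, inferInstance,
        Group.isNilpotent_of_isMulCommutative _, of_derivedSeries_eq_bot ?_⟩
      rw [← map_derivedSeries_eq (QuotientGroup.mk'_surjective _), Subgroup.map_eq_bot_iff,
        QuotientGroup.ker_mk']

end FittingHeightLe

section fittingHeight

variable (G : Type) [Group G]

theorem fittingHeightLe_fittingHeight [Group.IsSolvable G] :
    FittingHeightLe (fittingHeight G) G := by
  obtain ⟨m, hm⟩ := (Group.isSolvable_def G).mp ‹_›
  exact Nat.sInf_mem (s := {n | FittingHeightLe n G})
    ⟨m, FittingHeightLe.of_derivedSeries_eq_bot hm⟩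

theorem fittingHeightLe_iff [Group.IsSolvable G] {n : ℕ} :
    FittingHeightLe n G ↔ fittingHeight G ≤ n :=
  ⟨fun h => Nat.sInf_le h, fun h => (fittingHeightLe_fittingHeight G).mono h⟩

theorem fittingHeight_pos [Group.IsSolvable G] [Nontrivial G] : 0 < fittingHeight G :=
  Nat.pos_of_ne_zero fun h0 =>
    not_subsingleton G (h0 ▸ fittingHeightLe_fittingHeight G : FittingHeightLe 0 G)

theorem le_fittingSub (N : Subgroup G) [N.Normal] [Group.IsNilpotent N] : N ≤ FittingSub G :=
  le_iSup₂_of_le N ‹_› (le_iSup_of_le ‹_› le_rfl)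

def normalSubgroupsQuotientFittingHeightLe (n : ℕ) : Set (Subgroup G) :=
  {K | ∃ hK : K.Normal, letI := hK; FittingHeightLe n (G ⧸ K)}

theorem top_mem_normalSubgroupsQuotientFittingHeightLe (n : ℕ) :
    ⊤ ∈ normalSubgroupsQuotientFittingHeightLe G n :=
  have := QuotientGroup.subsingleton_quotient_top (G := G)
  ⟨inferInstance, FittingHeightLe.of_subsingleton n _⟩

theorem infClosed_normalSubgroupsQuotientFittingHeightLe (n : ℕ) :
    InfClosed (normalSubgroupsQuotientFittingHeightLe G n) := by
  rintro K ⟨hK, hKn⟩ L ⟨hL, hLn⟩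
  exact ⟨inferInstance, FittingHeightLe.quotient_inf K L hKn hLn⟩

theorem SG_ne_bot [Finite G] [Nontrivial G] [Group.IsSolvable G] : SG G ≠ ⊥ := by
  intro hbot
  unfold SG at hbot
  have hpos := fittingHeight_pos G
  have hsub : {K : Subgroup G | ∃ hK : K.Normal,
      (letI := hK; fittingHeight (G ⧸ K)) < fittingHeight G} ⊆
      normalSubgroupsQuotientFittingHeightLe G (fittingHeight G - 1) := by
    rintro K ⟨hK, hlt⟩
    exact ⟨hK, (fittingHeightLe_iff (G ⧸ K)).mpr (by omega)⟩
  obtain ⟨_, hquot⟩ := (infClosed_normalSubgroupsQuotientFittingHeightLe G _).sInf_mem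
    (Set.toFinite _) (top_mem_normalSubgroupsQuotientFittingHeightLe G _) hsub
  have := (fittingHeightLe_iff G).mp (FittingHeightLe.of_quotient_of_eq_bot hbot hquot)
  omega

theorem SG_le_fittingSub [Group.IsSolvable G] [Nontrivial G] : SG G ≤ FittingSub G := by
  have hpos := fittingHeight_pos G
  obtain ⟨N, hN, hnil, hq⟩ : FittingHeightLe (fittingHeight G - 1 + 1) G :=
    Nat.sub_add_cancel hpos ▸ fittingHeightLe_fittingHeight G
  have hlt : fittingHeight (G ⧸ N) < fittingHeight G :=
    ((fittingHeightLe_iff (G ⧸ N)).mp hq).trans_lt (by omega)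
  unfold SG
  exact le_trans (sInf_le ⟨hN, hlt⟩) (le_fittingSub G N)

end fittingHeight

theorem statement_0 (G : Type) [Group G] [Finite G] [Nontrivial G]
    (hsol : IsSolvable G) :
    SG G ≠ ⊥ ∧ SG G ≤ FittingSub G := by
  have : Group.IsSolvable G := hsol
  exact ⟨SG_ne_bot G, SG_le_fittingSub G⟩
end

section
/- Let G be a finite solvable group possessing a unique minimal normal subgroup V. Then V acts transitively by conjugation on the set of complements to V in G: for any two subgroups A, B of G with AV = G, A ∩ V = 1, BV = G, B ∩ V = 1, there exists v ∈ V with B^v = A. -/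
/-!
A minimal normal subgroup `V` of a finite solvable group is an abelian `p`-group. When `V` is
the unique minimal normal subgroup and has a complement `A`, it is self-centralizing: `C_G(V) ∩ A`
is normal in `G = AV`, hence trivial. Take `N/V` minimal normal in `G/V`; it is a `q`-group, and
`q ≠ p` because the centre of a normal `p`-subgroup `N` would contain `V`, putting `N` inside
`C_G(V) = V`. So `V` is a normal Hall subgroup of `N`, and by Schur–Zassenhaus `A ∩ N` and
`B ∩ N` are conjugate by some `v ∈ V`. Once `A ∩ N = B ∩ N`, the normalizer `M` of this
intersection contains `A` and `B`; `M ∩ V` is normal in `G = MV`, and `V ≤ M` would make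
`A ∩ N ≠ 1` normal in `G`, forcing `V ≤ A`. Hence `M ∩ V = 1`, `M` is a complement of `V`,
and `A = M = B`.
-/

open Subgroup

variable {G : Type*} [Group G]

namespace Subgroup

abbrev IsMinimalNormal (V : Subgroup G) : Prop :=
  Minimal (fun W : Subgroup G => W.Normal ∧ W ≠ ⊥) V

theorem isComplement'_iff_isCompl {V K : Subgroup G} [V.Normal] :
    IsComplement' V K ↔ IsCompl V K :=
  ⟨IsComplement'.isCompl, fun h => isComplement'_of_disjoint_and_mul_eq_univ h.disjoint
    (by rw [← normal_mul, h.sup_eq_top, coe_top])⟩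

theorem isComplement'_of_sup_eq_top_of_inf_eq_bot {V K : Subgroup G} [V.Normal]
    (h₁ : K ⊔ V = ⊤) (h₂ : K ⊓ V = ⊥) : IsComplement' V K :=
  isComplement'_iff_isCompl.mpr ⟨disjoint_iff.mpr (inf_comm K V ▸ h₂),
    codisjoint_iff.mpr (sup_comm K V ▸ h₁)⟩

theorem sup_inf_assoc_of_le_of_normal {V C : Subgroup G} [V.Normal] (K : Subgroup G)
    (h : V ≤ C) : (V ⊔ K) ⊓ C = V ⊔ K ⊓ C := by
  apply SetLike.coe_injective
  rw [coe_inf, normal_mul, normal_mul, mul_inf_assoc _ _ _ h]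

theorem IsComplement'.subgroupOf_of_le {V K N : Subgroup G} [V.Normal] (h : IsComplement' V K)
    (hVN : V ≤ N) : IsComplement' (V.subgroupOf N) (K.subgroupOf N) := by
  rw [isComplement'_iff_isCompl] at h ⊢
  constructor
  · rw [disjoint_iff, subgroupOf, subgroupOf, ← comap_inf, h.inf_eq_bot]
    exact bot_subgroupOf (H := N)
  · rw [codisjoint_iff, ← inf_subgroupOf_right K N, ← subgroupOf_sup hVN inf_le_right,
      ← sup_inf_assoc_of_le_of_normal _ hVN, h.sup_eq_top, top_inf_eq, subgroupOf_self]

theorem IsComplement'.map_conj {V K : Subgroup G} [V.Normal] (h : IsComplement' V K) (g : G) :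
    IsComplement' V (K.map (MulAut.conj g).toMonoidHom) := by
  let e := MulEquiv.mapSubgroup (MulAut.conj g)
  have : IsCompl (e V) (e K) :=
    ⟨h.isCompl.disjoint.map_orderIso e, h.isCompl.codisjoint.map_orderIso e⟩
  rwa [isComplement'_iff_isCompl, ← Normal.map_conj_eq V g]

theorem IsComplement'.eq_of_le [Finite G] {V A M : Subgroup G} (hA : IsComplement' V A)
    (hM : IsComplement' V M) (h : A ≤ M) : A = M :=
  eq_of_le_of_card_ge h (Nat.le_of_mul_le_mul_left
    (hM.card_mul_card.trans hA.card_mul_card.symm).le Nat.card_pos)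

theorem normal_of_sup_eq_top_of_le_normalizer {H K L : Subgroup G} (h : K ⊔ L = ⊤)
    (hK : K ≤ normalizer (H : Set G)) (hL : L ≤ normalizer (H : Set G)) : H.Normal :=
  normalizer_eq_top_iff.mp (top_unique (h ▸ sup_le hK hL))

theorem le_normalizer_inf_of_normal (K : Subgroup G) {N : Subgroup G} [N.Normal] :
    K ≤ normalizer ((K ⊓ N : Subgroup G) : Set G) :=
  (le_inf K.le_normalizer le_normalizer_of_normal).trans inf_normalizer_le_normalizer_inf

theorem exists_isMinimalNormal [Finite G] [Nontrivial G] : ∃ V : Subgroup G, V.IsMinimalNormal :=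
  exists_minimal_of_wellFoundedLT _ ⟨⊤, inferInstance, top_ne_bot⟩

theorem IsMinimalNormal.isMulCommutative [Group.IsSolvable G] {V : Subgroup G}
    (hV : V.IsMinimalNormal) : IsMulCommutative V := by
  have := hV.prop.1
  have hVV : ⁅V, V⁆ = ⊥ := by
    by_contra h
    exact hV.not_prop_of_lt (Group.IsSolvable.commutator_lt_of_ne_bot hV.prop.2)
      ⟨commutator_normal V V, h⟩
  rwa [commutator_eq_bot_iff_le_centralizer, le_centralizer_iff_isMulCommutative] at hVV

theorem IsMinimalNormal.exists_isPGroup [Finite G] {V : Subgroup G} [IsMulCommutative V]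
    (hV : V.IsMinimalNormal) : ∃ p, p.Prime ∧ IsPGroup p V := by
  have := hV.prop.1
  set p := (Nat.card V).minFac
  have hp : Fact p.Prime := ⟨Nat.minFac_prime (by rw [Ne, card_eq_one]; exact hV.prop.2)⟩
  obtain ⟨P⟩ : Nonempty (Sylow p V) := inferInstance
  have := P.characteristic_of_normal (normal_of_isMulCommutative _)
  have hP : (P : Subgroup V).map V.subtype ≠ ⊥ := by
    rw [Ne, map_eq_bot_iff_of_injective _ V.subtype_injective]
    exact P.ne_bot_of_dvd_card (Nat.minFac_dvd _)
  have hPV := hV.eq_of_le ⟨inferInstance, hP⟩ (map_subtype_le _)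
  exact ⟨p, hp.out, hPV ▸ P.isPGroup'.map V.subtype⟩

theorem exists_normal_gt_relIndex_eq_prime_pow [Finite G] [Group.IsSolvable G] {V : Subgroup G}
    [V.Normal] (hV : V ≠ ⊤) :
    ∃ N : Subgroup G, N.Normal ∧ V < N ∧ ∃ q k : ℕ, q.Prime ∧ V.relIndex N = q ^ k := by
  have : Nontrivial (G ⧸ V) := QuotientGroup.nontrivial_iff.mpr hV
  obtain ⟨Nq, hNq⟩ := exists_isMinimalNormal (G := G ⧸ V)
  have := hNq.isMulCommutative
  obtain ⟨q, hq, hNqp⟩ := hNq.exists_isPGroup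
  have : Fact q.Prime := ⟨hq⟩
  obtain ⟨k, hk⟩ := IsPGroup.iff_card.mp hNqp
  have hrel := relIndex_ker (K := Nq.comap (QuotientGroup.mk' V)) (QuotientGroup.mk' V)
  rw [QuotientGroup.ker_mk',
    map_comap_eq_self_of_surjective (QuotientGroup.mk'_surjective V)] at hrel
  refine ⟨_, hNq.prop.1.comap _, lt_of_le_not_ge ?_ fun h => ?_, q, k, hq, hrel.trans hk⟩
  · exact (QuotientGroup.ker_mk' V).ge.trans (ker_le_comap _ _)
  · exact hNq.prop.2 (card_eq_one.mp (hrel ▸ relIndex_eq_one.mpr h))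

theorem eq_bot_of_le_of_isComplement' {V A H : Subgroup G}
    (hmin : ∀ W : Subgroup G, W.Normal → W ≠ ⊥ → V ≤ W) (hV : V ≠ ⊥)
    (hA : IsComplement' V A) (hH : H.Normal) (hHA : H ≤ A) : H = ⊥ := by
  by_contra hH'
  exact hV (hA.disjoint.eq_bot_of_le ((hmin H hH hH').trans hHA))

theorem centralizer_eq_self_of_isComplement' {V A : Subgroup G} [V.Normal] [IsMulCommutative V]
    (hmin : ∀ W : Subgroup G, W.Normal → W ≠ ⊥ → V ≤ W) (hV : V ≠ ⊥)
    (hA : IsComplement' V A) : centralizer (V : Set G) = V := by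
  set C := centralizer (V : Set G)
  have hVC : V ≤ C := le_centralizer_iff_isMulCommutative.mpr ‹_›
  have hCA : A ⊓ C = ⊥ := by
    refine eq_bot_of_le_of_isComplement' hmin hV hA ?_ inf_le_left
    refine normal_of_sup_eq_top_of_le_normalizer (sup_comm V A ▸ hA.sup_eq_top)
      (le_normalizer_inf_of_normal A) ?_
    exact (le_centralizer_iff.mp inf_le_right).trans (centralizer_le_normalizer _)
  calc C = (V ⊔ A) ⊓ C := by rw [hA.sup_eq_top, top_inf_eq]
    _ = V := by rw [sup_inf_assoc_of_le_of_normal _ hVC, hCA, sup_bot_eq]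

theorem le_of_isPGroup_of_isComplement' [Finite G] {V A N : Subgroup G} [V.Normal]
    [IsMulCommutative V] (hmin : ∀ W : Subgroup G, W.Normal → W ≠ ⊥ → V ≤ W) (hV : V ≠ ⊥)
    (hA : IsComplement' V A) {p : ℕ} [Fact p.Prime] [N.Normal] (hN : IsPGroup p N) : N ≤ V := by
  rcases eq_or_ne N ⊥ with rfl | hN'
  · exact bot_le
  have : Nontrivial N := (nontrivial_iff_ne_bot N).mpr hN'
  have hZ : (center N).map N.subtype ≠ ⊥ := by
    rw [Ne, map_eq_bot_iff_of_injective _ N.subtype_injective]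
    exact (nontrivial_iff_ne_bot _).mp hN.center_nontrivial
  have hZN : (center N).map N.subtype ≤ centralizer (N : Set G) := by
    rintro _ ⟨z, hz, rfl⟩
    exact mem_centralizer_iff.mpr fun n hn => congrArg Subtype.val (mem_center_iff.mp hz ⟨n, hn⟩)
  rw [← centralizer_eq_self_of_isComplement' hmin hV hA, ← le_centralizer_iff]
  exact (hmin _ inferInstance hZ).trans hZN

theorem coprime_card_relIndex_of_isComplement' [Finite G] {V A N : Subgroup G} [V.Normal]
    [IsMulCommutative V] (hmin : ∀ W : Subgroup G, W.Normal → W ≠ ⊥ → V ≤ W) (hV : V ≠ ⊥)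
    (hA : IsComplement' V A) {p : ℕ} (hp : p.Prime) (hVp : IsPGroup p V) [N.Normal] (hVN : V < N)
    {q k : ℕ} (hq : q.Prime) (hNq : V.relIndex N = q ^ k) :
    (Nat.card V).Coprime (V.relIndex N) := by
  have : Fact p.Prime := ⟨hp⟩
  obtain ⟨n, hn⟩ := IsPGroup.iff_card.mp hVp
  have hqp : q ≠ p := by
    rintro rfl
    have hN : IsPGroup q N := IsPGroup.of_card (n := n + k) (by
      rw [← relIndex_bot_left, ← relIndex_mul_relIndex ⊥ V N bot_le hVN.le, relIndex_bot_left,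
        hn, hNq, pow_add])
    exact hVN.not_ge (le_of_isPGroup_of_isComplement' hmin hV hA hN)
  rw [hn, hNq]
  exact ((Nat.coprime_primes hp hq).mpr hqp.symm).pow n k

-- `K`, as a transversal of `H`, is a point of `H.QuotientDiff` fixed by `K`, and by
-- Schur–Zassenhaus every stabilizer in that action is a complement of `H`.
theorem exists_stabilizer_eq_of_isComplement' [Finite G] {H K : Subgroup G} [H.Normal]
    [IsMulCommutative H] (hco : (Nat.card H).Coprime H.index) (hK : IsComplement' H K) :
    ∃ α : H.QuotientDiff, MulAction.stabilizer G α = K := by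
  let α : H.QuotientDiff := Quotient.mk'' ⟨K, hK.symm⟩
  refine ⟨α, (hK.eq_of_le (isComplement'_stabilizer_of_coprime hco) fun k hk => ?_).symm⟩
  exact congr_arg Quotient.mk'' (Subtype.ext (op_smul_coe_set (K.inv_mem hk)))

theorem exists_map_conj_eq_of_isComplement' [Finite G] {H K₁ K₂ : Subgroup G} [H.Normal]
    [IsMulCommutative H] (hco : (Nat.card H).Coprime H.index) (h₁ : IsComplement' H K₁)
    (h₂ : IsComplement' H K₂) : ∃ h ∈ H, K₂.map (MulAut.conj h).toMonoidHom = K₁ := by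
  obtain ⟨α₁, rfl⟩ := exists_stabilizer_eq_of_isComplement' hco h₁
  obtain ⟨α₂, rfl⟩ := exists_stabilizer_eq_of_isComplement' hco h₂
  obtain ⟨h, rfl⟩ := exists_smul_eq hco α₂ α₁
  exact ⟨h, h.2, (MulAction.stabilizer_smul_eq_stabilizer_map_conj (h : G) α₂).symm⟩

theorem exists_map_conj_inf_eq_of_isComplement' [Finite G] {V N A B : Subgroup G} [V.Normal]
    [IsMulCommutative V] (hVN : V ≤ N) (hco : (Nat.card V).Coprime (V.relIndex N))
    (hA : IsComplement' V A) (hB : IsComplement' V B) :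
    ∃ v ∈ V, (B ⊓ N).map (MulAut.conj v).toMonoidHom = A ⊓ N := by
  have hcard : Nat.card (V.subgroupOf N) = Nat.card V :=
    Nat.card_congr (subgroupOfEquivOfLe hVN).toEquiv
  obtain ⟨v, hv, hvBA⟩ := exists_map_conj_eq_of_isComplement' (hcard ▸ hco)
    (hA.subgroupOf_of_le hVN) (hB.subgroupOf_of_le hVN)
  refine ⟨v, hv, ?_⟩
  have hcomm : N.subtype.comp (MulAut.conj v).toMonoidHom
      = (MulAut.conj (v : G)).toMonoidHom.comp N.subtype := rfl
  rw [← subgroupOf_map_subtype B N, ← subgroupOf_map_subtype A N, ← hvBA, map_map, map_map,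
    hcomm]

theorem eq_of_inf_eq_of_isComplement' [Finite G] {V N A B : Subgroup G} [V.Normal] [N.Normal]
    [IsMulCommutative V] (hmin : ∀ W : Subgroup G, W.Normal → W ≠ ⊥ → V ≤ W) (hV : V ≠ ⊥)
    (hVN : V < N) (hA : IsComplement' V A) (hB : IsComplement' V B) (hAB : A ⊓ N = B ⊓ N) :
    A = B := by
  set M := normalizer ((A ⊓ N : Subgroup G) : Set G)
  have hAM : A ≤ M := le_normalizer_inf_of_normal A
  have hBM : B ≤ M := by simp only [M, hAB]; exact le_normalizer_inf_of_normal B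
  have hMV : M ⊔ V = ⊤ := by
    rw [eq_top_iff, ← hA.sup_eq_top, sup_comm]
    exact sup_le_sup_right hAM V
  have hMV' : M ⊓ V = ⊥ := by
    by_contra h
    have hVV : V ≤ centralizer (V : Set G) := le_centralizer_iff_isMulCommutative.mpr ‹_›
    have hMVn : (M ⊓ V).Normal := normal_of_sup_eq_top_of_le_normalizer hMV
      (le_normalizer_inf_of_normal M)
      ((le_centralizer_iff.mp (inf_le_right.trans hVV)).trans (centralizer_le_normalizer _))
    have hVM : V ≤ M := (hmin _ hMVn h).trans inf_le_left
    have hAN : A ⊓ N ≠ ⊥ := fun h => hVN.ne' (by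
      rw [← top_inf_eq N, ← hA.sup_eq_top, sup_inf_assoc_of_le_of_normal _ hVN.le, h, sup_bot_eq])
    exact hAN (eq_bot_of_le_of_isComplement' hmin hV hA
      (normalizer_eq_top_iff.mp (top_unique (hA.sup_eq_top ▸ sup_le hVM hAM))) inf_le_left)
  have hM := isComplement'_of_sup_eq_top_of_inf_eq_bot hMV hMV'
  exact (hA.eq_of_le hM hAM).trans (hB.eq_of_le hM hBM).symm

end Subgroup

theorem statement_4 (G : Type) [Group G] [Finite G] (hsol : IsSolvable G)
    (V : Subgroup G) (hVn : V.Normal) (hV : V ≠ ⊥)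
    (hmin : ∀ W : Subgroup G, W.Normal → W ≠ ⊥ → V ≤ W)
    (A B : Subgroup G)
    (hA : A ⊔ V = ⊤) (hA' : A ⊓ V = ⊥)
    (hB : B ⊔ V = ⊤) (hB' : B ⊓ V = ⊥) :
    ∃ v ∈ V, B.map (MulAut.conj v).toMonoidHom = A := by
  have : Group.IsSolvable G := hsol
  have hAc : IsComplement' V A := isComplement'_of_sup_eq_top_of_inf_eq_bot hA hA'
  have hBc : IsComplement' V B := isComplement'_of_sup_eq_top_of_inf_eq_bot hB hB'
  rcases eq_or_ne V ⊤ with rfl | hVtop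
  · refine ⟨1, one_mem _, ?_⟩
    rw [isComplement'_top_left.mp hAc, isComplement'_top_left.mp hBc, Subgroup.map_bot]
  have hVmin : V.IsMinimalNormal := ⟨⟨hVn, hV⟩, fun W hW _ => hmin W hW.1 hW.2⟩
  have := hVmin.isMulCommutative
  obtain ⟨p, hp, hVp⟩ := hVmin.exists_isPGroup
  obtain ⟨N, hN, hVN, q, k, hq, hNq⟩ := exists_normal_gt_relIndex_eq_prime_pow hVtop
  have hco := coprime_card_relIndex_of_isComplement' hmin hV hAc hp hVp hVN hq hNq
  obtain ⟨v, hv, hvN⟩ := exists_map_conj_inf_eq_of_isComplement' hVN.le hco hAc hBc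
  refine ⟨v, hv, (eq_of_inf_eq_of_isComplement' hmin hV hVN hAc (hBc.map_conj v) ?_).symm⟩
  rw [← hvN, map_inf_eq _ _ _ (MulAut.conj v).injective]
  exact congrArg (_ ⊓ ·) (Normal.map_conj_eq N v)
end

section
/- Let G be a finite solvable group acting transitively on a set Ω of size d > 1, and let a ∈ G act nontrivially on Ω in every primitive quotient action (equivalently: a generates G as a normal subgroup, i.e. G = ⟨a^G⟩ and the action is faithful and transitive with d > 1). Then a fixes at most d/2 points of Ω. -/
/-!
Replace `G` by its image in `Sym(Ω)`, so that the action is faithful, and take a nontrivial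
abelian normal subgroup `N` (the last nontrivial term of the derived series). If `N` is
transitive it is regular, and identifying `Ω` with `N` through a fixed point `x` of `a`
identifies the fixed points of `a` with the centralizer of `a` in `N`, a proper subgroup because
`a ≠ 1`. Otherwise the `N`-orbits are blocks of a common size `b ≥ 2`, every fixed point of `a`
lies in an `a`-stable block, and induction on the (smaller) set of blocks gives
`2 |Fix a| ≤ 2 b |Fix_{Ω/N} a| ≤ b |Ω/N| = |Ω|`.
-/

open MulAction Subgroup

universe u

theorem Nat.card_preimage_eq_mul_of_card_fiber_eq {α β : Type*} [Finite α] [Finite β]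
    (f : α → β) {b : ℕ} (hf : ∀ y, Nat.card {x // f x = y} = b) (s : Set β) :
    Nat.card (f ⁻¹' s) = Nat.card s * b := by
  have := Fintype.ofFinite s
  change Nat.card {x // f x ∈ s} = _
  rw [← Nat.card_congr (Equiv.sigmaSubtypeFiberEquivSubtype f (q := (· ∈ s)) fun _ ↦ Iff.rfl),
    Nat.card_sigma]
  simp [hf]

theorem Group.IsSolvable.exists_normal_isMulCommutative_ne_bot {G : Type*} [Group G]
    [Group.IsSolvable G] [Nontrivial G] :
    ∃ N : Subgroup G, N.Normal ∧ N ≠ ⊥ ∧ IsMulCommutative N := by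
  classical
  have hex : ∃ n, derivedSeries G n = ⊥ := IsSolvable.solvable
  obtain ⟨m, hm⟩ : ∃ m, Nat.find hex = m + 1 :=
    Nat.exists_eq_add_one_of_ne_zero fun h ↦ by simpa [h] using Nat.find_spec hex
  refine ⟨derivedSeries G m, derivedSeries_normal G m, Nat.find_min hex (by omega), ?_⟩
  rw [← le_centralizer_iff_isMulCommutative, ← commutator_eq_bot_iff_le_centralizer,
    ← derivedSeries_succ, ← hm]
  exact Nat.find_spec hex

theorem Subgroup.ne_one_of_normalClosure_singleton_eq_top {G : Type*} [Group G] [Nontrivial G]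
    {a : G} (ha : normalClosure {a} = ⊤) : a ≠ 1 := fun h ↦
  bot_ne_top (by rwa [h, normalClosure_eq_bot_iff.mpr le_rfl] at ha)

namespace MulAction

variable {G Ω : Type*} [Group G] [MulAction G Ω]

theorem nontrivial_of_isPretransitive [IsPretransitive G Ω] [Nontrivial Ω] : Nontrivial G := by
  obtain ⟨x, y, hxy⟩ := exists_pair_ne Ω
  obtain ⟨g, hg⟩ := exists_smul_eq G x y
  exact nontrivial_of_ne g 1 fun h ↦ hxy (by rwa [h, one_smul] at hg)

section OrbitsOfNormalSubgroup

variable (N : Subgroup G) [N.Normal]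

instance orbitRel.Quotient.mulActionOfNormal : MulAction G (orbitRel.Quotient N Ω) where
  smul g := Quotient.map (g • ·) fun x y h ↦ by
    change g • x ∈ MulAction.orbit N (g • y)
    rw [← smul_orbit_eq_orbit_smul]
    exact Set.smul_mem_smul_set h
  one_smul q := Quotient.inductionOn q fun x ↦ congrArg _ (one_smul G x)
  mul_smul g h q := Quotient.inductionOn q fun x ↦ congrArg _ (mul_smul g h x)

instance orbitRel.Quotient.isPretransitive_of_normal [IsPretransitive G Ω] :
    IsPretransitive G (orbitRel.Quotient N Ω) :=
  IsPretransitive.of_surjective_map (f := ⟨Quotient.mk'', fun _ _ ↦ rfl⟩)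
    Quotient.mk''_surjective inferInstance

variable [IsPretransitive G Ω]

theorem card_orbit_normal_eq (x y : Ω) : Nat.card (orbit N x) = Nat.card (orbit N y) := by
  obtain ⟨g, rfl⟩ := exists_smul_eq G x y
  rw [← smul_orbit_eq_orbit_smul, Set.natCard_smul_set]

theorem card_fiber_orbitRel_quotient (x : Ω) (q : orbitRel.Quotient N Ω) :
    Nat.card {y // Quotient.mk'' y = q} = Nat.card (orbit N x) := by
  induction q using Quotient.inductionOn' with
  | h z =>
    rw [← card_orbit_normal_eq N z x, ← orbitRel.Quotient.orbit_mk]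
    exact Nat.card_congr (Equiv.subtypeEquivRight fun _ ↦ orbitRel.Quotient.mem_orbit.symm)

variable [Finite Ω]

theorem card_eq_card_orbitRel_quotient_mul (x : Ω) :
    Nat.card Ω = Nat.card (orbitRel.Quotient N Ω) * Nat.card (orbit N x) := by
  rw [← Nat.card_univ, ← Set.preimage_univ (f := Quotient.mk''),
    Nat.card_preimage_eq_mul_of_card_fiber_eq _ (card_fiber_orbitRel_quotient N x), Nat.card_univ]

theorem card_fixedBy_le_card_fixedBy_orbitRel_quotient_mul (a : G) (x : Ω) :
    Nat.card (fixedBy Ω a) ≤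
      Nat.card (fixedBy (orbitRel.Quotient N Ω) a) * Nat.card (orbit N x) := by
  rw [← Nat.card_preimage_eq_mul_of_card_fiber_eq _ (card_fiber_orbitRel_quotient N x)]
  exact Nat.card_mono (Set.toFinite _) fun y (hy : a • y = y) ↦ congrArg Quotient.mk'' hy

theorem two_mul_card_fixedBy_le_of_orbitRel_quotient {a : G}
    (h : 2 * Nat.card (fixedBy (orbitRel.Quotient N Ω) a) ≤ Nat.card (orbitRel.Quotient N Ω)) :
    2 * Nat.card (fixedBy Ω a) ≤ Nat.card Ω := by
  rcases isEmpty_or_nonempty Ω with _ | ⟨⟨x⟩⟩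
  · simp
  calc 2 * Nat.card (fixedBy Ω a)
      ≤ 2 * Nat.card (fixedBy (orbitRel.Quotient N Ω) a) * Nat.card (orbit N x) := by
        rw [mul_assoc]
        exact Nat.mul_le_mul_left 2 (card_fixedBy_le_card_fixedBy_orbitRel_quotient_mul N a x)
    _ ≤ Nat.card (orbitRel.Quotient N Ω) * Nat.card (orbit N x) := Nat.mul_le_mul_right _ h
    _ = Nat.card Ω := (card_eq_card_orbitRel_quotient_mul N x).symm

theorem card_orbitRel_quotient_lt [FaithfulSMul G Ω] (hN : N ≠ ⊥) :
    Nat.card (orbitRel.Quotient N Ω) < Nat.card Ω := by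
  obtain ⟨n, hn1⟩ := ne_bot_iff_exists_ne_one.mp hN
  obtain ⟨x, hx⟩ : ∃ x : Ω, n • x ≠ x := by
    by_contra! h
    exact hn1 (eq_of_smul_eq_smul fun x ↦ (h x).trans (one_smul _ x).symm)
  have : Nontrivial (orbit N x) :=
    Set.nontrivial_coe_sort.mpr ⟨_, mem_orbit x n, x, mem_orbit_self x, hx⟩
  have : Nonempty (orbitRel.Quotient N Ω) := ⟨Quotient.mk'' x⟩
  rw [card_eq_card_orbitRel_quotient_mul N x]
  exact lt_mul_of_one_lt_right Nat.card_pos Finite.one_lt_card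

end OrbitsOfNormalSubgroup

section RegularNormalSubgroup

variable (N : Subgroup G)

theorem stabilizer_eq_bot_of_isMulCommutative [FaithfulSMul G Ω] [IsMulCommutative N]
    [IsPretransitive N Ω] (x : Ω) : stabilizer N x = ⊥ := by
  refine (Subgroup.eq_bot_iff_forall _).mpr fun n hn ↦ eq_of_smul_eq_smul fun y : Ω ↦ ?_
  obtain ⟨m, rfl⟩ := exists_smul_eq N x y
  rw [one_smul, smul_smul, mul_comm' n m, mul_smul, mem_stabilizer_iff.mp hn]

theorem bijective_smul_of_stabilizer_eq_bot [IsPretransitive N Ω] {x : Ω}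
    (hx : stabilizer N x = ⊥) : Function.Bijective fun n : N ↦ n • x := by
  refine ⟨fun n m (h : n • x = m • x) ↦ ?_, exists_smul_eq N x⟩
  have : m⁻¹ * n ∈ stabilizer N x := by
    rw [mem_stabilizer_iff, mul_smul, h, inv_smul_smul]
  rw [hx, mem_bot, inv_mul_eq_one] at this
  exact this.symm

theorem smul_mem_fixedBy_iff_mem_centralizer [N.Normal] {x : Ω} (hx : stabilizer N x = ⊥)
    {a : G} (ha : a • x = x) (n : N) :
    (n : G) • x ∈ fixedBy Ω a ↔ (n : G) ∈ centralizer {a} := by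
  have hc : (n : G)⁻¹ * (a * n * a⁻¹) ∈ N := mul_mem (inv_mem n.2) (‹N.Normal›.conj_mem n n.2 a)
  have hsmul : ((n : G)⁻¹ * (a * n * a⁻¹)) • x = (n : G)⁻¹ • a • (n : G) • x := by
    rw [mul_smul, mul_smul, mul_smul, inv_smul_eq_iff.mpr ha.symm]
  have hstab : (⟨_, hc⟩ : N) ∈ stabilizer N x ↔ (n : G)⁻¹ * (a * n * a⁻¹) = 1 := by
    rw [hx, mem_bot, Subgroup.mk_eq_one]
  rw [mem_stabilizer_iff, Subgroup.mk_smul, hsmul, inv_smul_eq_iff] at hstab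
  rw [mem_fixedBy, hstab, inv_mul_eq_one, eq_mul_inv_iff_mul_eq, mem_centralizer_singleton_iff]

theorem card_fixedBy_eq_card_centralizer_subgroupOf [N.Normal] [IsPretransitive N Ω]
    {x : Ω} (hx : stabilizer N x = ⊥) {a : G} (ha : a • x = x) :
    Nat.card (fixedBy Ω a) = Nat.card ((centralizer {a}).subgroupOf N) :=
  (Nat.card_congr <| (Equiv.ofBijective _ (bijective_smul_of_stabilizer_eq_bot N hx)).subtypeEquiv
    fun n ↦ mem_subgroupOf.trans (smul_mem_fixedBy_iff_mem_centralizer N hx ha n).symm).symm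

theorem two_mul_card_fixedBy_le_of_stabilizer_eq_bot [Finite Ω] [FaithfulSMul G Ω] [N.Normal]
    [IsPretransitive N Ω] (hfree : ∀ x : Ω, stabilizer N x = ⊥) {a : G} (ha : a ≠ 1) :
    2 * Nat.card (fixedBy Ω a) ≤ Nat.card Ω := by
  rcases (fixedBy Ω a).eq_empty_or_nonempty with h | ⟨x, hx⟩
  · simp [h]
  have hbij := bijective_smul_of_stabilizer_eq_bot N (hfree x)
  have : Finite N := Finite.of_injective _ hbij.1
  have hC : (centralizer {a}).subgroupOf N ≠ ⊤ := by
    refine fun hC ↦ ha (eq_of_smul_eq_smul fun y : Ω ↦ ?_)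
    obtain ⟨n, rfl⟩ := hbij.2 y
    rw [one_smul]
    exact (smul_mem_fixedBy_iff_mem_centralizer N (hfree x) hx n).mpr
      (mem_subgroupOf.mp (hC ▸ mem_top n))
  calc 2 * Nat.card (fixedBy Ω a)
      = 2 * Nat.card ((centralizer {a}).subgroupOf N) := by
        rw [card_fixedBy_eq_card_centralizer_subgroupOf N (hfree x) hx]
    _ ≤ ((centralizer {a}).subgroupOf N).index * Nat.card ((centralizer {a}).subgroupOf N) :=
        Nat.mul_le_mul_right _ (one_lt_index_of_ne_top hC)
    _ = Nat.card N := index_mul_card _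
    _ = Nat.card Ω := Nat.card_eq_of_bijective _ hbij

end RegularNormalSubgroup

theorem two_mul_card_fixedBy_le_of_normalClosure_eq_top {G Ω : Type u} [Group G]
    [Group.IsSolvable G] [MulAction G Ω] [Finite Ω] [IsPretransitive G Ω] [Nontrivial Ω] {a : G}
    (ha : normalClosure {a} = ⊤) : 2 * Nat.card (fixedBy Ω a) ≤ Nat.card Ω := by
  induction hn : Nat.card Ω using Nat.strong_induction_on generalizing G Ω with
  | _ n ih =>
  subst hn
  let R := (toPermHom G Ω).range
  let φ : G →* R := (toPermHom G Ω).rangeRestrict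
  have hφ : Function.Surjective φ := (toPermHom G Ω).rangeRestrict_surjective
  have : Group.IsSolvable R := Group.isSolvable_of_surjective hφ
  have : IsPretransitive R Ω := ⟨fun x y ↦ let ⟨g, hg⟩ := exists_smul_eq G x y; ⟨φ g, hg⟩⟩
  have : Nontrivial R := nontrivial_of_isPretransitive (Ω := Ω)
  have hRa : normalClosure {φ a} = ⊤ := by
    rw [← Set.image_singleton, ← map_normalClosure _ _ hφ, ha, map_top_of_surjective _ hφ]
  change 2 * Nat.card (fixedBy Ω (φ a)) ≤ _
  obtain ⟨N, hN, hNbot, hNcomm⟩ := Group.IsSolvable.exists_normal_isMulCommutative_ne_bot (G := R)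
  rcases subsingleton_or_nontrivial (orbitRel.Quotient N Ω) with hQ | hQ
  · have := (pretransitive_iff_subsingleton_quotient N Ω).mpr hQ
    exact two_mul_card_fixedBy_le_of_stabilizer_eq_bot N
      (stabilizer_eq_bot_of_isMulCommutative N) (ne_one_of_normalClosure_singleton_eq_top hRa)
  · exact two_mul_card_fixedBy_le_of_orbitRel_quotient N
      (ih _ (card_orbitRel_quotient_lt N hNbot) hRa rfl)

end MulAction

theorem statement_6_general (G : Type) [Group G] (hsol : IsSolvable G)
    (Ω : Type) [Finite Ω] [MulAction G Ω]
    (htrans : ∀ ω₁ ω₂ : Ω, ∃ g : G, g • ω₁ = ω₂)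
    (hd : 1 < Nat.card Ω)
    (a : G) (hgen : Subgroup.closure {x | IsConj a x} = ⊤) :
    2 * Nat.card {ω : Ω // a • ω = ω} ≤ Nat.card Ω := by
  have : Group.IsSolvable G := hsol
  have : IsPretransitive G Ω := ⟨htrans⟩
  have : Nontrivial Ω := Finite.one_lt_card_iff_nontrivial.mp hd
  have ha : normalClosure {a} = ⊤ := by
    rwa [normalClosure, Group.conjugatesOfSet, Set.biUnion_singleton]
  exact two_mul_card_fixedBy_le_of_normalClosure_eq_top ha

theorem statement_6 (G : Type) [Group G] [Finite G] (hsol : IsSolvable G)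
    (Ω : Type) [Finite Ω] [MulAction G Ω]
    (hfaithful : ∀ g : G, (∀ ω : Ω, g • ω = ω) → g = 1)
    (htrans : ∀ ω₁ ω₂ : Ω, ∃ g : G, g • ω₁ = ω₂)
    (hd : 1 < Nat.card Ω)
    (a : G) (hgen : Subgroup.closure {x | IsConj a x} = ⊤) :
    2 * Nat.card {ω : Ω // a • ω = ω} ≤ Nat.card Ω :=
  statement_6_general G hsol Ω htrans hd a hgen
end

section
/- Let G be a finite group and x ∈ G an element of order 2 such that ⟨x, x^g⟩ is a 2-group for every g ∈ G. Then the normal closure ⟨x^G⟩ is nilpotent (in fact x lies in O_2(G)). -/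
/-- The 2-core `O₂(G)`: the join of all normal 2-subgroups of `G`. -/
def twoCore (G : Type) [Group G] : Subgroup G :=
  ⨆ (N : Subgroup G) (_ : N.Normal) (_ : IsPGroup 2 N), N

open Subgroup

theorem le_twoCore {G : Type} [Group G] {N : Subgroup G} [hN : N.Normal] (hp : IsPGroup 2 N) :
    N ≤ twoCore G :=
  le_iSup_of_le N (le_iSup_of_le hN (le_iSup_of_le hp le_rfl))

variable {G H : Type*} [Group G] [Group H] {p : ℕ}

theorem map_subtype_closure_preimage (K : Subgroup G) (D : Set G) :
    (closure (K.subtype ⁻¹' D)).map K.subtype = closure (D ∩ K) := by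
  rw [MonoidHom.map_closure, Set.image_preimage_eq_inter_range, coe_subtype, Subtype.range_coe]

theorem closure_inter_closure_of_subset {A D : Set G} (h : A ⊆ D) :
    closure (D ∩ closure A) = closure A :=
  le_antisymm ((closure_le _).mpr Set.inter_subset_right)
    (closure_mono (Set.subset_inter h subset_closure))

theorem IsPGroup.of_quotient {R : Subgroup G} [R.Normal] (hR : IsPGroup p R)
    (hGR : IsPGroup p (G ⧸ R)) : IsPGroup p G := by
  have := (hGR.to_subgroup ⊤).comap_of_ker_isPGroup (QuotientGroup.mk' R)
    (by rwa [QuotientGroup.ker_mk'])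
  rw [comap_top] at this
  exact this.of_equiv topEquiv

theorem IsPGroup.exists_le_lt_le_normalizer [Fact p.Prime] {Q R : Subgroup G} [Finite Q]
    (hQ : IsPGroup p Q) (hRQ : R < Q) : ∃ U, R ≤ U ∧ U < Q ∧ Q ≤ normalizer (U : Set G) := by
  have : Group.IsNilpotent Q := hQ.isNilpotent
  obtain ⟨M, hM, hRM⟩ := (eq_top_or_exists_le_coatom (R.subgroupOf Q)).resolve_left
    fun h => hRQ.not_ge (subgroupOf_eq_top.mp h)
  have hMn : M.Normal :=
    NormalizerCondition.normal_of_coatom M Group.normalizerCondition_of_isNilpotent hM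
  have hMU : (M.map Q.subtype).subgroupOf Q = M :=
    comap_map_eq_self_of_injective Q.subtype_injective M
  refine ⟨M.map Q.subtype, fun r hr => ⟨⟨r, hRQ.le hr⟩, hRM hr, rfl⟩,
    (map_subtype_le M).lt_of_ne fun h => hM.1 ?_, ?_⟩
  · rw [← hMU, h, subgroupOf_self]
  · rw [← normal_subgroupOf_iff_le_normalizer (map_subtype_le M), hMU]
    exact hMn

theorem IsPGroup.exists_mem_inter_normalizer [Fact p.Prime] [Finite G] {D : Set G}
    {Q R : Subgroup G} (hQp : IsPGroup p Q) (hDQ : Q ≤ normalizer D) (hQ : closure (D ∩ Q) = Q)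
    (hR : closure (D ∩ R) = R) (hRQ : R < Q) :
    ∃ d ∈ D ∩ Q, d ∉ R ∧ d ∈ normalizer (R : Set G) := by
  induction Q using WellFoundedLT.induction with
  | _ Q IH =>
  obtain ⟨U, hRU, hUQ, hQU⟩ := hQp.exists_le_lt_le_normalizer hRQ
  set Q' := closure (D ∩ U)
  have hQ'Q : Q' < Q := ((closure_le _).mpr Set.inter_subset_right).trans_lt hUQ
  have hRQ' : R ≤ Q' := hR ▸ closure_mono (Set.inter_subset_inter_right D hRU)
  rcases hRQ'.lt_or_eq with hRQ' | rfl
  · obtain ⟨d, hd, hdR, hdN⟩ := IH Q' hQ'Q (hQp.to_le hQ'Q.le) (hQ'Q.le.trans hDQ)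
      (closure_inter_closure_of_subset Set.inter_subset_left) hRQ'
    exact ⟨d, ⟨hd.1, hQ'Q.le hd.2⟩, hdR, hdN⟩
  · obtain ⟨d, hdQ, hdU⟩ : ∃ d ∈ D ∩ Q, d ∉ U := by
      by_contra! h
      exact hUQ.not_ge (hQ ▸ (closure_le _).mpr h)
    refine ⟨d, hdQ, fun hdR => hdU ((closure_le _).mpr Set.inter_subset_right hdR), ?_⟩
    exact normalizer_le_normalizer_closure _ fun x => and_congr (hDQ hdQ.2 x) (hQU hdQ.2 x)

def IsConjInvariant (D : Set G) : Prop :=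
  ∀ g : G, ∀ d ∈ D, g * d * g⁻¹ ∈ D

def PairsGeneratePGroup (p : ℕ) (D : Set G) : Prop :=
  ∀ a ∈ D, ∀ b ∈ D, IsPGroup p (closure {a, b})

namespace IsConjInvariant

variable {D : Set G}

theorem le_normalizer (hD : IsConjInvariant D) (K : Subgroup G) : K ≤ normalizer D :=
  le_set_normalizer_iff.mpr fun g _ => hD g

theorem preimage (hD : IsConjInvariant D) (f : H →* G) : IsConjInvariant (f ⁻¹' D) := by
  intro g d hd
  simpa using hD (f g) (f d) hd

theorem image (hD : IsConjInvariant D) {f : G →* H} (hf : Function.Surjective f) :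
    IsConjInvariant (f '' D) := by
  rintro h _ ⟨d, hd, rfl⟩
  obtain ⟨g, rfl⟩ := hf h
  exact ⟨g * d * g⁻¹, hD g d hd, by simp⟩

theorem sdiff_one (hD : IsConjInvariant D) : IsConjInvariant (D \ {1}) := by
  rintro g d ⟨hd, hd1⟩
  exact ⟨hD g d hd, by simpa using hd1⟩

theorem image_conj (hD : IsConjInvariant D) (g : G) : MulAut.conj g '' D = D := by
  refine subset_antisymm ?_ fun d hd => ⟨g⁻¹ * d * g, ?_, by simp [mul_assoc]⟩
  · rintro _ ⟨d, hd, rfl⟩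
    exact hD g d hd
  · simpa using hD g⁻¹ d hd

theorem inter_smul_sylow (hD : IsConjInvariant D) (g : G) (T : Sylow p G) :
    D ∩ (g • T : Sylow p G) = MulAut.conj g '' (D ∩ T) := by
  rw [Set.image_inter (MulAut.conj g).injective, hD.image_conj, Sylow.coe_smul, ← Set.image_smul]
  rfl

theorem ncard_inter_sylow_eq [Finite G] [Fact p.Prime] (hD : IsConjInvariant D)
    (T T' : Sylow p G) : (D ∩ T).ncard = (D ∩ T').ncard := by
  obtain ⟨g, rfl⟩ := MulAction.exists_smul_eq G T T'
  rw [hD.inter_smul_sylow, Set.ncard_image_of_injective _ (MulAut.conj g).injective]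

theorem inter_sylow_eq_of_subset [Finite G] [Fact p.Prime] (hD : IsConjInvariant D)
    {T T' : Sylow p G} (h : D ∩ T ⊆ T') : D ∩ T = D ∩ T' :=
  Set.eq_of_subset_of_ncard_le (Set.subset_inter Set.inter_subset_left h)
    (hD.ncard_inter_sylow_eq T' T).le

end IsConjInvariant

namespace PairsGeneratePGroup

variable {D : Set G}

theorem preimage (hD : PairsGeneratePGroup p D) {f : H →* G} (hf : Function.Injective f) :
    PairsGeneratePGroup p (f ⁻¹' D) := by
  intro a ha b hb
  have := (hD _ ha _ hb).comap_of_injective f hf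
  rwa [← Set.image_pair, ← MonoidHom.map_closure, comap_map_eq_self_of_injective hf] at this

theorem image (hD : PairsGeneratePGroup p D) (f : G →* H) : PairsGeneratePGroup p (f '' D) := by
  rintro _ ⟨a, ha, rfl⟩ _ ⟨b, hb, rfl⟩
  have := (hD a ha b hb).map f
  rwa [MonoidHom.map_closure, Set.image_pair] at this

theorem mono (hD : PairsGeneratePGroup p D) {E : Set G} (hED : E ⊆ D) :
    PairsGeneratePGroup p E :=
  fun a ha b hb => hD a (hED ha) b (hED hb)

theorem exists_sylow [Fact p.Prime] (hD : PairsGeneratePGroup p D) {a b : G} (ha : a ∈ D)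
    (hb : b ∈ D) : ∃ T : Sylow p G, a ∈ T ∧ b ∈ T := by
  obtain ⟨T, hT⟩ := (hD a ha b hb).exists_le_sylow
  exact ⟨T, hT (subset_closure (Set.mem_insert a _)),
    hT (subset_closure (Set.mem_insert_of_mem a rfl))⟩

theorem exists_sylow_closure_inter_ne [Fact p.Prime] {D : Set G}
    (hpair : PairsGeneratePGroup p D) {d₀ : G} (hd₀ : d₀ ∈ D) (hgen : closure D = ⊤)
    (hG : ¬ IsPGroup p G) :
    ∃ T T' : Sylow p G, closure (D ∩ T) ≠ closure (D ∩ T') ∧ (D ∩ T ∩ T').Nonempty := by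
  obtain ⟨T₀, hd₀T₀, -⟩ := hpair.exists_sylow hd₀ hd₀
  obtain ⟨y, hyD, hyW⟩ : ∃ y ∈ D, y ∉ closure (D ∩ T₀) := by
    by_contra! h
    have hW : closure (D ∩ T₀) = ⊤ := top_le_iff.mp (hgen ▸ (closure_le _).mpr h)
    exact hG ((T₀.isPGroup'.to_le ((closure_le _).mpr Set.inter_subset_right)).of_equiv
      (hW ▸ topEquiv))
  obtain ⟨T₁, hyT₁, hd₀T₁⟩ := hpair.exists_sylow hyD hd₀
  exact ⟨T₁, T₀, fun h => hyW (h ▸ subset_closure ⟨hyD, hyT₁⟩), d₀, ⟨hd₀, hd₀T₁⟩, hd₀T₀⟩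

end PairsGeneratePGroup

theorem IsConjInvariant.ssubset_inter_inter_sylow [Fact p.Prime] [Finite G] {D A : Set G}
    (hD : IsConjInvariant D) (hAD : A ⊆ D) {U S : Sylow p G} (hAU : A ⊆ U)
    (hAS : closure (D ∩ normalizer (closure A : Set G)) ≤ S)
    (hne : closure A ≠ closure (D ∩ U)) : A ⊂ D ∩ U ∩ S := by
  have hS {d} (hd : d ∈ D) (hdN : d ∈ normalizer (closure A : Set G)) : d ∈ S :=
    hAS (subset_closure ⟨hd, hdN⟩)
  have hAU' : A ⊆ D ∩ U ∩ S := fun a ha =>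
    ⟨⟨hAD ha, hAU ha⟩, hS (hAD ha) (Subgroup.le_normalizer (subset_closure ha))⟩
  have hUp : IsPGroup p (closure (D ∩ U)) :=
    U.isPGroup'.to_le ((closure_le _).mpr Set.inter_subset_right)
  obtain ⟨d, ⟨hd, hdW⟩, hdA, hdN⟩ := hUp.exists_mem_inter_normalizer (hD.le_normalizer _)
    (closure_inter_closure_of_subset Set.inter_subset_left) (closure_inter_closure_of_subset hAD)
    ((closure_mono (Set.subset_inter hAD hAU)).lt_of_ne hne)
  have hdU : d ∈ U := (closure_le _).mpr Set.inter_subset_right hdW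
  exact (Set.ssubset_iff_of_subset hAU').mpr
    ⟨d, ⟨⟨hd, hdU⟩, hS hd hdN⟩, fun h => hdA (subset_closure h)⟩

theorem IsConjInvariant.eq_empty_of_forall_isPGroup [Fact p.Prime] [Finite G] {D : Set G}
    (hD : IsConjInvariant D) (hD1 : 1 ∉ D) (hpair : PairsGeneratePGroup p D)
    (hgen : closure D = ⊤) (hsub : ∀ K : Subgroup G, K ≠ ⊤ → IsPGroup p (closure (D ∩ K)))
    (hcore : ∀ R : Subgroup G, R.Normal → IsPGroup p R → R = ⊥) : D = ∅ := by
  by_contra hne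
  obtain ⟨d₀, hd₀⟩ := Set.nonempty_iff_ne_empty.mpr hne
  have hG : ¬ IsPGroup p G := fun hG =>
    hD1 (mem_bot.mp (hcore ⊤ inferInstance (hG.to_subgroup ⊤) ▸ mem_top d₀) ▸ hd₀)
  obtain ⟨T₁, T₀, h₁₀, hne₁₀⟩ := hpair.exists_sylow_closure_inter_ne hd₀ hgen hG
  let W : Sylow p G → Subgroup G := fun T => closure (D ∩ T)
  obtain ⟨⟨T, T'⟩, hTT', hmax⟩ :=
    Set.exists_max_image {q : Sylow p G × Sylow p G | W q.1 ≠ W q.2}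
      (fun q => (D ∩ q.1 ∩ q.2).ncard) (Set.toFinite _) ⟨(T₁, T₀), h₁₀⟩
  set A := D ∩ T ∩ T'
  obtain ⟨a, haA⟩ : A.Nonempty := (Set.ncard_pos (Set.toFinite _)).mp <|
    ((Set.ncard_pos (Set.toFinite _)).mpr hne₁₀).trans_le (hmax (T₁, T₀) h₁₀)
  have hAD : A ⊆ D := fun x hx => hx.1.1
  have hAT : A ⊆ T := fun x hx => hx.1.2
  have hAT' : A ⊆ T' := fun x hx => hx.2
  set R := closure A
  have hRbot : R ≠ ⊥ := by
    intro h
    have ha1 : a ∈ (⊥ : Subgroup G) := h ▸ subset_closure haA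
    exact hD1 (mem_bot.mp ha1 ▸ haA.1.1)
  have hN : normalizer (R : Set G) ≠ ⊤ := fun h =>
    hRbot (hcore R (normalizer_eq_top_iff.mp h) (T.isPGroup'.to_le ((closure_le _).mpr hAT)))
  obtain ⟨S, hS⟩ := (hsub _ hN).exists_le_sylow
  have hWS {U : Sylow p G} (hAU : A ⊆ U) (hRU : R ≠ W U) : W U = W S := by
    by_contra hUS
    exact (Set.ncard_lt_ncard (hD.ssubset_inter_inter_sylow hAD hAU hS hRU)).not_ge
      (hmax (U, S) hUS)
  have hRW {U U' : Sylow p G} (hAU' : A ⊆ U') (hUU' : W U ≠ W U') : R ≠ W U := fun h => by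
    have hWU : W U ≤ U' := h ▸ show R ≤ (U' : Subgroup G) from (closure_le _).mpr hAU'
    exact hUU' (congrArg Subgroup.closure
      (hD.inter_sylow_eq_of_subset (Subgroup.subset_closure.trans hWU)))
  exact hTT' ((hWS hAT (hRW hAT' hTT')).trans (hWS hAT' (hRW hAT hTT'.symm)).symm)

theorem IsConjInvariant.isPGroup_closure [Fact p.Prime] [Finite G] {D : Set G}
    (hD : IsConjInvariant D) (hpair : PairsGeneratePGroup p D) : IsPGroup p (closure D) := by
  induction hn : Nat.card G using Nat.strong_induction_on generalizing G with
  | _ n IH =>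
  subst hn
  have hsub (K : Subgroup G) (hK : K ≠ ⊤) : IsPGroup p (closure (D ∩ K)) := by
    obtain ⟨g, hg⟩ : ∃ g, g ∉ K := by simpa [eq_top_iff'] using hK
    rw [← map_subtype_closure_preimage]
    exact (IH _ (Finite.card_subtype_lt hg) (hD.preimage K.subtype)
      (hpair.preimage K.subtype_injective) rfl).map _
  by_cases hgen : closure D = ⊤
  swap
  · exact closure_inter_closure_of_subset (subset_refl D) ▸ hsub _ hgen
  by_cases hcore : ∀ R : Subgroup G, R.Normal → IsPGroup p R → R = ⊥
  · have hD' : D \ {1} = ∅ := hD.sdiff_one.eq_empty_of_forall_isPGroup (fun h => h.2 rfl)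
      (hpair.mono Set.sdiff_subset) (by rwa [closure_sdiff_one])
      (fun K hK => by rw [Set.sdiff_inter_right_comm, closure_sdiff_one]; exact hsub K hK)
      hcore
    rw [← closure_sdiff_one, hD', Subgroup.closure_empty]
    exact IsPGroup.of_bot
  · push Not at hcore
    obtain ⟨R, hRn, hRp, hRbot⟩ := hcore
    have hcard : Nat.card (G ⧸ R) < Nat.card G := by
      rw [card_eq_card_quotient_mul_card_subgroup R]
      exact lt_mul_of_one_lt_right Nat.card_pos ((one_lt_card_iff_ne_bot R).mpr hRbot)
    have hπ := QuotientGroup.mk'_surjective R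
    have hGR := IH _ hcard (hD.image hπ) (hpair.image _) rfl
    rw [← MonoidHom.map_closure, hgen, map_top_of_surjective _ hπ] at hGR
    exact (hRp.of_quotient (hGR.of_equiv topEquiv)).to_subgroup _

theorem isConjInvariant_conjugatesOfSet (s : Set G) :
    IsConjInvariant (Group.conjugatesOfSet s) :=
  fun _ _ hd => Group.conj_mem_conjugatesOfSet hd

theorem pairsGeneratePGroup_conjugatesOfSet_singleton {x : G}
    (h : ∀ g : G, IsPGroup p (closure {x, g * x * g⁻¹})) :
    PairsGeneratePGroup p (Group.conjugatesOfSet {x}) := by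
  intro a ha b hb
  obtain ⟨c₁, rfl⟩ := isConj_iff.mp (by simpa [Group.mem_conjugatesOfSet_iff] using ha)
  obtain ⟨c₂, rfl⟩ := isConj_iff.mp (by simpa [Group.mem_conjugatesOfSet_iff] using hb)
  have := (h (c₁⁻¹ * c₂)).map (MulAut.conj c₁).toMonoidHom
  rw [MonoidHom.map_closure, Set.image_pair] at this
  convert this using 4 <;> simp only [MulEquiv.coe_toMonoidHom, MulAut.conj_apply] <;> group

theorem statement_17_general (G : Type) [Group G] [Finite G] (x : G)
    (h : ∀ g : G, IsPGroup 2 (Subgroup.closure ({x, g * x * g⁻¹} : Set G))) :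
    Group.IsNilpotent (Subgroup.normalClosure ({x} : Set G)) ∧ x ∈ twoCore G := by
  have hp : IsPGroup 2 (normalClosure ({x} : Set G)) :=
    (isConjInvariant_conjugatesOfSet {x}).isPGroup_closure
      (pairsGeneratePGroup_conjugatesOfSet_singleton h)
  exact ⟨hp.isNilpotent, le_twoCore hp (subset_normalClosure rfl)⟩

theorem statement_17 (G : Type) [Group G] [Finite G] (x : G) (hx : orderOf x = 2)
    (h : ∀ g : G, IsPGroup 2 (Subgroup.closure ({x, g * x * g⁻¹} : Set G))) :
    Group.IsNilpotent (Subgroup.normalClosure ({x} : Set G)) ∧ x ∈ twoCore G :=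
  statement_17_general G x h
end
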